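/- arXiv:1011.5551 — 2 statements merged into one kernel-verified Lean document; each statement's English description precedes it below -/
import Mathlib

section
/- Let (W, S) be a Coxeter system with length function ℓ, let X, X' ⊆ S, and let W_X and W_{X'} be the standard parabolic subgroups of W generated by X and X' respectively. For w ∈ W, let w^X denote the unique element of minimal length in the coset wW_X. Assume that the subgroup W_{X'} is finite. Then for every w ∈ W, the set {(vw)^X : v ∈ W_{X'}} contains a unique element of maximal length; that is, there exists a unique u in this set with ℓ(u') ≤ ℓ(u) for all u' in this set. (Part (ii) of the lemma of Richarz/Waldspurger on double coset representatives, stated in the paper for the Iwahori–Weyl group with W^{K'} and W^K attached to parahoric subgroups; here formulated for the underlying Coxeter group, to which it reduces, the finiteness of W_{X'} corresponding to K' being parahoric.) -/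
/-!
Let `a` be of minimal length in the double coset `W_{X'} w W_X`, which contains every `(v w)^X`.
Writing an element `v a x` of the double coset as a word for `v`, then one for `a`, then one for
`x`, and extracting a reduced subword (deletion property), no letter of the reduced word of `a`
can be dropped; hence every minimal coset representative `u` in the double coset is `u = v a`
with `ℓ u = ℓ v + ℓ a`. Let `w₀` be the longest element of the finite group `W_{X'}` and
`m = (w₀ a)^X = v' a`, so that `w₀ a = m x₀` with `ℓ w₀ = ℓ v' + ℓ x₀`. If `u = v a` is a
representative with `ℓ m ≤ ℓ u`, then `v v'⁻¹ w₀ ∈ W_{X'}` has length `ℓ v + ℓ x₀ ≥ ℓ w₀`, so it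
is `w₀` by uniqueness of the longest element (a consequence of the lifting property); thus
`v = v'` and `u = m`.

The deletion and lifting properties come from the strong exchange condition, which is proved
with the reflection cocycle: `W` acts on `W × ZMod 2` so that the parity of the number of
occurrences of a reflection `t` in the left inversion sequence of a word depends only on the
element the word represents.
-/

open scoped Pointwise

namespace CoxeterSystem

theorem prod_map_alternatingWord_two_mul {B G : Type*} [Monoid G] (f : B → G) (i j : B)
    (p : ℕ) : ((alternatingWord i j (2 * p)).map f).prod = (f i * f j) ^ p := by
  induction p with
  | zero => simp [alternatingWord]
  | succ p ih =>
    rw [show 2 * (p + 1) = 2 * p + 1 + 1 by ring, alternatingWord_succ', alternatingWord_succ']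
    simp [ih, pow_succ', mul_assoc]

variable {B : Type*} {W : Type*} [Group W] {M : CoxeterMatrix B} (cs : CoxeterSystem M W)

local prefix:100 "s " => cs.simple
local prefix:100 "π " => cs.wordProd
local prefix:100 "ℓ " => cs.length
local prefix:100 "lis " => cs.leftInvSeq

section ReflectionRepresentation

variable [DecidableEq W]

def reflectionPerm (i : B) : Equiv.Perm (W × ZMod 2) :=
  Function.Involutive.toPerm (fun z => (s i * z.1 * s i, z.2 + if z.1 = s i then 1 else 0)) <| by
    rintro ⟨x, ε⟩
    ext
    · simp [mul_assoc]
    · by_cases h : x = s i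
      · simp [h, add_assoc]; decide
      · simp [h, mul_eq_one_iff_inv_eq, eq_comm]

theorem reflectionPerm_apply (i : B) (x : W) (ε : ZMod 2) :
    cs.reflectionPerm i (x, ε) = (s i * x * s i, ε + if x = s i then 1 else 0) :=
  rfl

theorem prod_map_reflectionPerm (ω : List B) (x : W) (ε : ZMod 2) :
    (ω.map cs.reflectionPerm).prod (x, ε) =
      (π ω * x * (π ω)⁻¹, ε + (lis ω).count (π ω * x * (π ω)⁻¹)) := by
  induction ω with
  | nil => simp
  | cons i ω ih =>
    set y := π ω * x * (π ω)⁻¹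
    have hy : π (i :: ω) * x * (π (i :: ω))⁻¹ = MulAut.conj (s i) y := by
      simp [y, wordProd_cons, mul_assoc]
    rw [List.map_cons, List.prod_cons, Equiv.Perm.mul_apply, ih, reflectionPerm_apply, hy,
      leftInvSeq, List.count_cons, List.count_map_of_injective _ _ (MulAut.conj (s i)).injective]
    have hc : (s i == MulAut.conj (s i) y) = (y == s i) := by
      simp [mul_eq_one_iff_inv_eq, eq_comm]
    rw [hc]
    simp [add_assoc]

theorem count_leftInvSeq_alternatingWord (i j : B) (t : W) :
    ((lis (alternatingWord i j (2 * M i j))).count t : ZMod 2) = 0 := by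
  set g : ℕ → W := fun k => s i * (s j * s i) ^ k
  have hg : lis (alternatingWord i j (2 * M i j)) = (List.range (2 * M i j)).map g := by
    refine List.ext_getElem (by simp) fun k hk _ => ?_
    rw [getElem_leftInvSeq_alternatingWord cs i j _ k (by simpa using hk),
      prod_alternatingWord_eq_mul_pow]
    simp [g, show (2 * k + 1) / 2 = k by omega]
  have hperiod :
      (List.range (M i j)).map (fun k => g (M i j + k)) = (List.range (M i j)).map g := by
    simp [g, pow_add]
  rw [hg, two_mul, List.range_add, List.map_append, List.map_map, Function.comp_def, hperiod,
    List.count_append, Nat.cast_add, CharTwo.add_self_eq_zero]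

theorem isLiftable_reflectionPerm : M.IsLiftable cs.reflectionPerm := by
  intro i j
  rw [← prod_map_alternatingWord_two_mul]
  ext ⟨x, ε⟩ : 1
  have h1 : π (alternatingWord i j (2 * M i j)) = 1 := by
    rw [wordProd, prod_map_alternatingWord_two_mul, simple_mul_simple_pow]
  rw [prod_map_reflectionPerm, h1]
  simp [count_leftInvSeq_alternatingWord]

noncomputable def reflectionRep : W →* Equiv.Perm (W × ZMod 2) :=
  cs.lift ⟨cs.reflectionPerm, cs.isLiftable_reflectionPerm⟩

theorem reflectionRep_wordProd (ω : List B) :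
    cs.reflectionRep (π ω) = (ω.map cs.reflectionPerm).prod := by
  rw [wordProd, map_list_prod, List.map_map]
  congr 2
  funext i
  exact cs.lift_apply_simple cs.isLiftable_reflectionPerm i

/-- The parity of the number of occurrences of `t` in the left inversion sequence of any word
for `w` (`inversionParity_wordProd`). -/
noncomputable def inversionParity (w t : W) : ZMod 2 :=
  (cs.reflectionRep w (w⁻¹ * t * w, 0)).2

theorem inversionParity_wordProd (ω : List B) (t : W) :
    cs.inversionParity (π ω) t = (lis ω).count t := by
  simp [inversionParity, reflectionRep_wordProd, prod_map_reflectionPerm, mul_assoc]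

theorem reflectionRep_apply (w x : W) (ε : ZMod 2) :
    cs.reflectionRep w (x, ε) = (w * x * w⁻¹, ε + cs.inversionParity w (w * x * w⁻¹)) := by
  obtain ⟨ω, rfl⟩ := cs.wordProd_surjective w
  rw [reflectionRep_wordProd, prod_map_reflectionPerm, inversionParity_wordProd]

theorem inversionParity_mul (u v t : W) :
    cs.inversionParity (u * v) t = cs.inversionParity u t + cs.inversionParity v (u⁻¹ * t * u) := by
  have h : v * ((u * v)⁻¹ * t * (u * v)) * v⁻¹ = u⁻¹ * t * u := by group
  rw [inversionParity, map_mul, Equiv.Perm.mul_apply, reflectionRep_apply cs v, h,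
    reflectionRep_apply]
  simp [mul_assoc, add_comm]

theorem inversionParity_one (t : W) : cs.inversionParity 1 t = 0 := by
  simpa using cs.inversionParity_wordProd [] t

theorem inversionParity_simple_self (i : B) : cs.inversionParity (s i) (s i) = 1 := by
  simpa using cs.inversionParity_wordProd [i] (s i)

theorem inversionParity_self {t : W} (ht : cs.IsReflection t) : cs.inversionParity t t = 1 := by
  obtain ⟨u, i, rfl⟩ := ht
  have h := cs.inversionParity_mul u u⁻¹ (u * s i * u⁻¹)
  have e1 : u * s i * u⁻¹ = u * (s i * u⁻¹) := mul_assoc ..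
  have e2 : u⁻¹ * (u * s i * u⁻¹) * u = s i := by group
  rw [mul_inv_cancel, inversionParity_one, e2] at h
  rw [e1, inversionParity_mul, ← e1, e2, inversionParity_mul, inv_simple,
    simple_mul_simple_cancel_right, inversionParity_simple_self]
  linear_combination -h

theorem mem_leftInvSeq_of_inversionParity_eq_one {ω : List B} {t : W}
    (h : cs.inversionParity (π ω) t = 1) : t ∈ lis ω := by
  by_contra hn
  simp [inversionParity_wordProd, List.count_eq_zero_of_not_mem hn] at h

theorem length_mul_lt_iff_inversionParity_eq_one {t : W} (ht : cs.IsReflection t) (w : W) :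
    ℓ (t * w) < ℓ w ↔ cs.inversionParity w t = 1 := by
  have hlt : ∀ w, cs.inversionParity w t = 1 → ℓ (t * w) < ℓ w := by
    intro w h
    obtain ⟨ω, hω, rfl⟩ := cs.exists_isReduced w
    exact (cs.isLeftInversion_of_mem_leftInvSeq hω
      (cs.mem_leftInvSeq_of_inversionParity_eq_one h)).2
  refine ⟨fun h => ?_, hlt w⟩
  by_contra hne
  have h0 : cs.inversionParity w t = 0 :=
    ((by decide : ∀ e : ZMod 2, e = 0 ∨ e = 1) _).resolve_right hne
  -- by the cocycle identity `t` is then an inversion of `t * w`, i.e. `ℓ w < ℓ (t * w)`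
  have := hlt (t * w) (by
    rw [inversionParity_mul, cs.inversionParity_self ht, ht.inv, ht.mul_self, one_mul, h0,
      add_zero])
  rw [← mul_assoc, ht.mul_self, one_mul] at this
  omega

end ReflectionRepresentation

theorem mem_leftInvSeq_of_length_mul_lt {t : W} (ht : cs.IsReflection t) {ω : List B}
    (h : ℓ (t * π ω) < ℓ (π ω)) : t ∈ lis ω := by
  classical
  exact cs.mem_leftInvSeq_of_inversionParity_eq_one
    ((cs.length_mul_lt_iff_inversionParity_eq_one ht _).1 h)

theorem exists_eraseIdx_of_length_mul_lt {t : W} (ht : cs.IsReflection t) {ω : List B}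
    (h : ℓ (t * π ω) < ℓ (π ω)) : ∃ j < ω.length, t * π ω = π (ω.eraseIdx j) := by
  obtain ⟨j, hj, rfl⟩ := List.getElem_of_mem (cs.mem_leftInvSeq_of_length_mul_lt ht h)
  refine ⟨j, by simpa using hj, ?_⟩
  rw [← getD_leftInvSeq_mul_wordProd, List.getD_eq_getElem]

theorem exists_isReduced_sublist (ω : List B) :
    ∃ ρ, cs.IsReduced ρ ∧ ρ.Sublist ω ∧ π ρ = π ω := by
  induction ω with
  | nil => exact ⟨[], by simp [IsReduced], List.Sublist.refl _, rfl⟩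
  | cons i ω ih =>
    obtain ⟨ρ, hρ, hsub, hπ⟩ := ih
    rw [IsReduced] at hρ
    rcases cs.length_simple_mul (π ρ) i with h | h
    · refine ⟨i :: ρ, ?_, hsub.cons_cons i, by rw [wordProd_cons, wordProd_cons, hπ]⟩
      rw [IsReduced, wordProd_cons, h, hρ, List.length_cons]
    · obtain ⟨j, hj, he⟩ :=
        cs.exists_eraseIdx_of_length_mul_lt (cs.isReflection_simple i) (ω := ρ) (by omega)
      refine ⟨ρ.eraseIdx j, ?_, (List.eraseIdx_sublist ρ j).trans (hsub.cons i), ?_⟩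
      · rw [IsReduced, ← he, List.length_eraseIdx_of_lt hj]
        omega
      · rw [← he, wordProd_cons, hπ]

theorem leftInvSeq_append (ω ω' : List B) :
    lis (ω ++ ω') = lis ω ++ (lis ω').map (MulAut.conj (π ω)) := by
  induction ω with
  | nil => simp
  | cons i ω ih => simp [leftInvSeq, ih, wordProd_cons, Function.comp_def]

theorem length_mul_simple_mul {a b : W} {i : B} (hab : ℓ (a * b) = ℓ a + ℓ b)
    (ha : ℓ a < ℓ (a * s i)) (hb : ℓ b < ℓ (s i * b)) : ℓ (a * s i * b) = ℓ a + ℓ b + 1 := by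
  have ht : cs.IsReflection (a * s i * a⁻¹) := ⟨a, i, rfl⟩
  have htab : a * s i * a⁻¹ * (a * b) = a * s i * b := by group
  have hne : ℓ (a * s i * b) ≠ ℓ (a * b) := htab ▸ ht.length_mul_right_ne (a * b)
  have hle : ℓ (a * s i * b) ≤ ℓ a + ℓ b + 1 := by
    have := cs.length_mul_le (a * s i) b
    have := cs.length_mul_le a (s i)
    simp only [length_simple] at *
    omega
  suffices ¬ ℓ (a * s i * b) < ℓ (a * b) by omega
  intro hlt
  rw [← htab] at hlt
  obtain ⟨α, hα, rfl⟩ := cs.exists_isReduced a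
  obtain ⟨β, hβ, rfl⟩ := cs.exists_isReduced b
  rw [← wordProd_append] at hlt
  have hmem := cs.mem_leftInvSeq_of_length_mul_lt ht hlt
  rw [leftInvSeq_append, List.mem_append, List.mem_map] at hmem
  rcases hmem with hmem | ⟨r, hr, hrt⟩
  · have := (cs.isLeftInversion_of_mem_leftInvSeq hα hmem).2
    rw [show π α * s i * (π α)⁻¹ * π α = π α * s i by group] at this
    omega
  · obtain rfl : r = s i := (MulAut.conj (π α)).injective (by simpa [mul_assoc] using hrt)
    have := (cs.isLeftInversion_of_mem_leftInvSeq hβ hr).2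
    omega

def parabolicSubgroup (X : Set B) : Subgroup W :=
  Subgroup.closure (cs.simple '' X)

variable {X Y : Set B}

theorem simple_mem_parabolicSubgroup {i : B} (hi : i ∈ X) : s i ∈ cs.parabolicSubgroup X :=
  Subgroup.subset_closure ⟨i, hi, rfl⟩

theorem wordProd_mem_parabolicSubgroup {ω : List B} (hω : ∀ i ∈ ω, i ∈ X) :
    π ω ∈ cs.parabolicSubgroup X :=
  (cs.parabolicSubgroup X).list_prod_mem (by
    simpa using fun i hi => cs.simple_mem_parabolicSubgroup (hω i hi))

theorem parabolicSubgroup_empty : cs.parabolicSubgroup ∅ = ⊥ := by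
  simp [parabolicSubgroup]

theorem exists_word_of_mem_parabolicSubgroup {w : W} (hw : w ∈ cs.parabolicSubgroup X) :
    ∃ ω : List B, (∀ i ∈ ω, i ∈ X) ∧ π ω = w := by
  induction hw using Subgroup.closure_induction_left with
  | one => exact ⟨[], by simp, rfl⟩
  | mul_left _ hx _ _ ih =>
    obtain ⟨i, hi, rfl⟩ := hx
    obtain ⟨ω, hω, rfl⟩ := ih
    exact ⟨i :: ω, by simpa [hi], by rw [wordProd_cons]⟩
  | inv_mul_cancel _ hx _ _ ih =>
    obtain ⟨i, hi, rfl⟩ := hx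
    obtain ⟨ω, hω, rfl⟩ := ih
    exact ⟨i :: ω, by simpa [hi], by rw [wordProd_cons, inv_simple]⟩

theorem parabolicSubgroup_induction {motive : W → Prop} (one : motive 1)
    (mul : ∀ i ∈ X, ∀ w ∈ cs.parabolicSubgroup X, ℓ (s i * w) = ℓ w + 1 → motive w →
      motive (s i * w))
    {w : W} (hw : w ∈ cs.parabolicSubgroup X) : motive w := by
  obtain ⟨ω, hωX, rfl⟩ := cs.exists_word_of_mem_parabolicSubgroup hw
  obtain ⟨ρ, hρ, hsub, hπ⟩ := cs.exists_isReduced_sublist ω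
  rw [← hπ]
  replace hωX : ∀ i ∈ ρ, i ∈ X := fun i hi => hωX i (hsub.subset hi)
  clear hsub hπ hw
  induction ρ with
  | nil => exact one
  | cons i ρ ih =>
    have hρ' : cs.IsReduced ρ := by simpa using hρ.drop 1
    have hρX : ∀ j ∈ ρ, j ∈ X := fun j hj => hωX j (List.mem_cons_of_mem i hj)
    rw [wordProd_cons]
    refine mul i (hωX i List.mem_cons_self) _ (cs.wordProd_mem_parabolicSubgroup hρX) ?_
      (ih hρ' hρX)
    rw [← wordProd_cons, hρ, hρ', List.length_cons]

theorem length_mul_add_length_of_forall_length_le {p : W} (hp : p ∈ cs.parabolicSubgroup X)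
    (hmax : ∀ q ∈ cs.parabolicSubgroup X, ℓ q ≤ ℓ p) {q : W} (hq : q ∈ cs.parabolicSubgroup X) :
    ℓ (q * p) + ℓ q = ℓ p := by
  refine cs.parabolicSubgroup_induction (motive := fun q => ℓ (q * p) + ℓ q = ℓ p) (by simp)
    (fun i hi q hq hlen ih => ?_) hq
  rcases cs.length_simple_mul (q * p) i with h | h
  · -- `s i` would lift `q⁻¹ * (q * p) = p` to a longer element of the subgroup
    have hlift := cs.length_mul_simple_mul (a := q⁻¹) (b := q * p) (i := i)
      (by rw [inv_mul_cancel_left, length_inv]; omega)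
      (by rw [← cs.length_inv (q⁻¹ * s i), mul_inv_rev, inv_inv, inv_simple, length_inv]; omega)
      (by omega)
    have := hmax _ (mul_mem (mul_mem (inv_mem hq) (cs.simple_mem_parabolicSubgroup hi))
      (mul_mem hq hp))
    rw [length_inv] at hlift
    omega
  · simp only [mul_assoc]
    omega

theorem eq_of_length_eq_of_forall_length_le {p p' : W} (hp : p ∈ cs.parabolicSubgroup X)
    (hmax : ∀ q ∈ cs.parabolicSubgroup X, ℓ q ≤ ℓ p) (hp' : p' ∈ cs.parabolicSubgroup X)
    (h : ℓ p' = ℓ p) : p' = p := by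
  have := cs.length_mul_add_length_of_forall_length_le hp hmax (inv_mem hp')
  rwa [length_inv, h, Nat.add_eq_right, length_eq_zero_iff, inv_mul_eq_one] at this

def IsMinimalCosetRep (X : Set B) (w : W) : Prop :=
  ∀ x ∈ cs.parabolicSubgroup X, ℓ w ≤ ℓ (w * x)

theorem isMinimalCosetRep_of_forall_length_le {y u : W}
    (hu : u ∈ y • (cs.parabolicSubgroup X : Set W))
    (hmin : ∀ z ∈ y • (cs.parabolicSubgroup X : Set W), ℓ u ≤ ℓ z) :
    cs.IsMinimalCosetRep X u := fun x hx => hmin _ <| by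
  rw [mem_leftCoset_iff] at hu ⊢
  simpa [mul_assoc] using mul_mem hu hx

theorem exists_length_mul_mul_eq_add {a : W}
    (ha : ∀ v ∈ cs.parabolicSubgroup Y, ∀ x ∈ cs.parabolicSubgroup X, ℓ a ≤ ℓ (v * a * x))
    {v x : W} (hv : v ∈ cs.parabolicSubgroup Y) (hx : x ∈ cs.parabolicSubgroup X) :
    ∃ v' ∈ cs.parabolicSubgroup Y, ∃ x' ∈ cs.parabolicSubgroup X,
      v' * a * x' = v * a * x ∧ ℓ (v * a * x) = ℓ v' + ℓ a + ℓ x' := by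
  obtain ⟨ξ, hξ, rfl⟩ := cs.exists_word_of_mem_parabolicSubgroup hv
  obtain ⟨χ, hχ, rfl⟩ := cs.exists_word_of_mem_parabolicSubgroup hx
  obtain ⟨α, hα, rfl⟩ := cs.exists_isReduced a
  obtain ⟨ρ, hρ, hsub, hπ⟩ := cs.exists_isReduced_sublist (ξ ++ α ++ χ)
  obtain ⟨_, χ', rfl, hsub', hχ'⟩ := List.sublist_append_iff.1 hsub
  obtain ⟨ξ', α', rfl, hξ', hα'⟩ := List.sublist_append_iff.1 hsub'
  have hv' := cs.wordProd_mem_parabolicSubgroup fun i hi => hξ i (hξ'.subset hi)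
  have hx' := cs.wordProd_mem_parabolicSubgroup fun i hi => hχ i (hχ'.subset hi)
  simp only [wordProd_append] at hπ
  unfold IsReduced at hρ hα
  -- no letter of the reduced word of `a` can be deleted, as `a` is shortest in its double coset
  obtain rfl : α' = α := by
    refine hα'.eq_of_length (le_antisymm hα'.length_le ?_)
    calc α.length = ℓ (π α) := hα.symm
      _ ≤ ℓ ((π ξ')⁻¹ * π ξ * π α * (π χ * (π χ')⁻¹)) :=
        ha _ (mul_mem (inv_mem hv') hv) _ (mul_mem hx (inv_mem hx'))
      _ = ℓ (π α') := by
        rw [show (π ξ')⁻¹ * π ξ * π α * (π χ * (π χ')⁻¹) =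
          (π ξ')⁻¹ * (π ξ * π α * π χ) * (π χ')⁻¹ by group, ← hπ]
        group
      _ ≤ α'.length := cs.length_wordProd_le α'
  refine ⟨π ξ', hv', π χ', hx', hπ, le_antisymm ?_ ?_⟩
  · rw [← hπ]
    exact (cs.length_mul_le _ _).trans (Nat.add_le_add_right (cs.length_mul_le _ _) _)
  · rw [wordProd_append, wordProd_append, hπ, List.length_append, List.length_append] at hρ
    have := cs.length_wordProd_le ξ'
    have := cs.length_wordProd_le χ'
    omega

theorem length_mul_eq_add_of_isMinimalCosetRep {u : W} (hu : cs.IsMinimalCosetRep X u) {x : W}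
    (hx : x ∈ cs.parabolicSubgroup X) : ℓ (u * x) = ℓ u + ℓ x := by
  have ha : ∀ v ∈ cs.parabolicSubgroup ∅, ∀ x ∈ cs.parabolicSubgroup X, ℓ u ≤ ℓ (v * u * x) := by
    simpa [parabolicSubgroup_empty, IsMinimalCosetRep] using hu
  obtain ⟨v', hv', x', -, he, hl⟩ := cs.exists_length_mul_mul_eq_add ha (one_mem _) hx
  rw [parabolicSubgroup_empty, Subgroup.mem_bot] at hv'
  subst hv'
  simp only [one_mul, mul_right_inj] at he
  subst he
  simpa using hl

theorem length_mul_eq_add_of_forall_length_le_mul {a : W}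
    (ha : ∀ v ∈ cs.parabolicSubgroup Y, ℓ a ≤ ℓ (v * a)) {v : W}
    (hv : v ∈ cs.parabolicSubgroup Y) : ℓ (v * a) = ℓ v + ℓ a := by
  have ha' : ∀ v ∈ cs.parabolicSubgroup Y, ∀ x ∈ cs.parabolicSubgroup ∅, ℓ a ≤ ℓ (v * a * x) := by
    simpa [parabolicSubgroup_empty] using ha
  obtain ⟨v', -, x', hx', he, hl⟩ := cs.exists_length_mul_mul_eq_add ha' hv (one_mem _)
  rw [parabolicSubgroup_empty, Subgroup.mem_bot] at hx'
  subst hx'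
  simp only [mul_one, mul_left_inj] at he
  subst he
  simpa using hl

theorem exists_eq_mul_of_isMinimalCosetRep {a u : W}
    (ha : ∀ v ∈ cs.parabolicSubgroup Y, ∀ x ∈ cs.parabolicSubgroup X, ℓ a ≤ ℓ (v * a * x))
    (hu : cs.IsMinimalCosetRep X u) {v x : W} (hv : v ∈ cs.parabolicSubgroup Y)
    (hx : x ∈ cs.parabolicSubgroup X) (huvx : u = v * a * x) :
    ∃ v' ∈ cs.parabolicSubgroup Y, u = v' * a ∧ ℓ u = ℓ v' + ℓ a := by
  subst huvx
  obtain ⟨v', hv', x', hx', he, hl⟩ := cs.exists_length_mul_mul_eq_add ha hv hx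
  have h1 := hu x'⁻¹ (inv_mem hx')
  rw [← he, mul_inv_cancel_right] at h1
  rw [← he] at hl ⊢
  have h2 := cs.length_mul_le v' a
  obtain rfl : x' = 1 := cs.length_eq_zero_iff.1 (by omega)
  exact ⟨v', hv', mul_one _, by simpa using hl⟩

theorem eq_of_length_le_of_isMinimalCosetRep {a w₀ m u v x : W}
    (ha : ∀ v ∈ cs.parabolicSubgroup Y, ∀ x ∈ cs.parabolicSubgroup X, ℓ a ≤ ℓ (v * a * x))
    (hw₀ : w₀ ∈ cs.parabolicSubgroup Y) (hw₀max : ∀ q ∈ cs.parabolicSubgroup Y, ℓ q ≤ ℓ w₀)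
    (hm : cs.IsMinimalCosetRep X m) (hmw₀ : m⁻¹ * (w₀ * a) ∈ cs.parabolicSubgroup X)
    (hu : cs.IsMinimalCosetRep X u) (hv : v ∈ cs.parabolicSubgroup Y)
    (hx : x ∈ cs.parabolicSubgroup X) (huvx : u = v * a * x) (hmu : ℓ m ≤ ℓ u) : u = m := by
  have hleft : ∀ q ∈ cs.parabolicSubgroup Y, ℓ (q * a) = ℓ q + ℓ a :=
    fun q => cs.length_mul_eq_add_of_forall_length_le_mul fun v hv => by
      simpa using ha v hv 1 (one_mem _)
  obtain ⟨v₁, hv₁, rfl, hlu⟩ := cs.exists_eq_mul_of_isMinimalCosetRep ha hu hv hx huvx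
  obtain ⟨v₂, hv₂, rfl, hlm⟩ := cs.exists_eq_mul_of_isMinimalCosetRep ha hm hw₀ (inv_mem hmw₀)
    (by group)
  set x₀ := (v₂ * a)⁻¹ * (w₀ * a)
  have hw₀len : ℓ w₀ = ℓ v₂ + ℓ x₀ := by
    have := cs.length_mul_eq_add_of_isMinimalCosetRep hm hmw₀
    rw [mul_inv_cancel_left, hleft w₀ hw₀] at this
    omega
  -- `h := v₂⁻¹ * w₀` satisfies `h * a = a * x₀`, so `v₁ * h` is as long as `w₀`
  have hv₁len : ℓ (v₁ * (v₂⁻¹ * w₀)) = ℓ v₁ + ℓ x₀ := by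
    have := cs.length_mul_eq_add_of_isMinimalCosetRep hu hmw₀
    rw [show v₁ * a * x₀ = v₁ * (v₂⁻¹ * w₀) * a by simp only [x₀]; group,
      hleft _ (mul_mem hv₁ (mul_mem (inv_mem hv₂) hw₀))] at this
    omega
  have hmem : v₁ * (v₂⁻¹ * w₀) ∈ cs.parabolicSubgroup Y := mul_mem hv₁ (mul_mem (inv_mem hv₂) hw₀)
  have heq := cs.eq_of_length_eq_of_forall_length_le hw₀ hw₀max hmem
    (le_antisymm (hw₀max _ hmem) (by omega))
  rw [← mul_assoc, mul_eq_right, mul_inv_eq_one] at heq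
  rw [heq]

end CoxeterSystem

/-- **Richarz/Waldspurger, part (ii)**: let `(W, S)` be a Coxeter system with
length function `ℓ`, let `X, X' ⊆ S`, and let `minRep : W → W` send each `w` to
the unique element `w^X` of minimal length in the coset `w W_X`.  If the
standard parabolic subgroup `W_{X'}` is finite, then for every `w ∈ W` the set
`{(v w)^X : v ∈ W_{X'}}` contains a unique element of maximal length. -/
theorem exists_unique_max_length_double_coset_rep
    {B : Type*} {W : Type*} [Group W] {M : CoxeterMatrix B}
    (cs : CoxeterSystem M W) (X X' : Set B)
    (hfin : ((Subgroup.closure (cs.simple '' X') : Subgroup W) : Set W).Finite)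
    (minRep : W → W)
    (hmem : ∀ w : W,
      minRep w ∈ w • ((Subgroup.closure (cs.simple '' X) : Subgroup W) : Set W))
    (hmin : ∀ w : W,
      ∀ v ∈ w • ((Subgroup.closure (cs.simple '' X) : Subgroup W) : Set W),
        cs.length (minRep w) ≤ cs.length v)
    (w : W) :
    ∃! u : W,
      u ∈ { x : W | ∃ v ∈ (Subgroup.closure (cs.simple '' X') : Subgroup W),
              x = minRep (v * w) } ∧
      ∀ u' ∈ { x : W | ∃ v ∈ (Subgroup.closure (cs.simple '' X') : Subgroup W),
              x = minRep (v * w) },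
        cs.length u' ≤ cs.length u := by
  set U := { x : W | ∃ v ∈ (Subgroup.closure (cs.simple '' X') : Subgroup W),
    x = minRep (v * w) }
  have hcos : ∀ y, y⁻¹ * minRep y ∈ cs.parabolicSubgroup X :=
    fun y => (mem_leftCoset_iff y).1 (hmem y)
  have hrep : ∀ y, cs.IsMinimalCosetRep X (minRep y) :=
    fun y => cs.isMinimalCosetRep_of_forall_length_le (hmem y) (hmin y)
  have hUfin : U.Finite :=
    (hfin.image fun v => minRep (v * w)).subset fun _ ⟨v, hv, hu⟩ => ⟨v, hv, hu.symm⟩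
  obtain ⟨_, ⟨va, hva, rfl⟩, hamin⟩ :=
    Set.exists_min_image U cs.length hUfin ⟨_, 1, one_mem _, rfl⟩
  -- `minRep (va * w)` is shortest in its double coset: every element lies in a coset of some
  -- `v * w`, whose representative in `U` is at least as long
  have ha : ∀ v ∈ cs.parabolicSubgroup X', ∀ x ∈ cs.parabolicSubgroup X,
      cs.length (minRep (va * w)) ≤ cs.length (v * minRep (va * w) * x) := by
    refine fun v hv x hx => (hamin _ ⟨v * va, mul_mem hv hva, rfl⟩).trans (hmin _ _ ?_)
    rw [mem_leftCoset_iff, show (v * va * w)⁻¹ * (v * minRep (va * w) * x) =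
      (va * w)⁻¹ * minRep (va * w) * x by group]
    exact mul_mem (hcos _) hx
  obtain ⟨w₀, hw₀, hw₀max⟩ := Set.exists_max_image _ cs.length hfin ⟨1, one_mem _⟩
  have key : ∀ v ∈ cs.parabolicSubgroup X',
      cs.length (minRep (w₀ * va * w)) ≤ cs.length (minRep (v * w)) →
        minRep (v * w) = minRep (w₀ * va * w) := fun v hv =>
    cs.eq_of_length_le_of_isMinimalCosetRep ha hw₀ hw₀max (hrep _)
      (by simpa [mul_assoc] using mul_mem (inv_mem (hcos (w₀ * va * w))) (hcos (va * w)))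
      (hrep _) (mul_mem hv (inv_mem hva)) (mul_mem (inv_mem (hcos (va * w))) (hcos (v * w)))
      (by group)
  obtain ⟨_, ⟨v, hv, rfl⟩, hmax⟩ := Set.exists_max_image U cs.length hUfin ⟨_, 1, one_mem _, rfl⟩
  have hw₀U : minRep (w₀ * va * w) ∈ U := ⟨w₀ * va, mul_mem hw₀ hva, rfl⟩
  refine ⟨_, ⟨hw₀U, ?_⟩, fun _ ⟨⟨v', hv', hu⟩, h⟩ => hu ▸ key v' hv' (hu ▸ h _ hw₀U)⟩
  rw [← key v hv (hmax _ hw₀U)]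
  exact hmax
end

section
/- Let R be a commutative ring in which 2 is invertible, let π₀ ∈ R, and let J = [[0, −1],[1, 0]] ∈ M₂(R). Then a matrix X ∈ M₂(R) satisfies the three conditions X² = π₀·I, ᵀX = −J·X·J, and charpoly(X) = T² − π₀ simultaneously if and only if X = 0 and π₀ = 0 in R. (Consequently, the affine chart U_{1,1} of the naive local model for the ramified quasi-split unitary group GU₂ with signature (1,1) at the special maximal parahoric subgroup is Spec k, the source of the extraneous non-flat component Spec k in M^{naive} ≅ P¹ ⊔ Spec k computed in the paper's Remark on GU₂.) -/
/-!
Conjugation by `J = [[0, −1], [1, 0]]` computes the adjugate of a `2 × 2` matrix: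
`−J·X·J = ᵀ(adj X)`. So the condition `ᵀX = −J·X·J` says `X = adj X`, while
`X + adj X = tr(X)·I` and the characteristic polynomial `T² − π₀` forces `tr X = 0`.
Hence `2X = 0`, so `X = 0` as `2` is a unit, and then `X² = π₀·I` gives `π₀ = 0`.
-/

open scoped Matrix

namespace Matrix

variable {R : Type*} [CommRing R]

theorem add_adjugate_fin_two (X : Matrix (Fin 2) (Fin 2) R) : X + adjugate X = trace X • 1 := by
  ext i j
  fin_cases i <;> fin_cases j <;> simp [adjugate_fin_two, trace_fin_two]; ring

theorem neg_J_mul_mul_J_eq_transpose_adjugate (X : Matrix (Fin 2) (Fin 2) R) :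
    -(!![(0 : R), -1; 1, 0] * X * !![(0 : R), -1; 1, 0]) = (adjugate X)ᵀ := by
  rw [X.eta_fin_two, adjugate_fin_two_of]
  ext i j
  fin_cases i <;> fin_cases j <;> simp

theorem eq_zero_of_eq_adjugate_of_trace_eq_zero (h2 : IsUnit (2 : R))
    {X : Matrix (Fin 2) (Fin 2) R} (hadj : X = adjugate X) (htr : trace X = 0) : X = 0 := by
  have h2X : (2 : R) • X = 0 := by
    rw [two_smul]
    nth_rewrite 2 [hadj]
    rw [add_adjugate_fin_two, htr, zero_smul]
  exact h2.smul_eq_zero.mp h2X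

theorem trace_eq_zero_of_charpoly_eq_X_sq_sub_C {X : Matrix (Fin 2) (Fin 2) R} {c : R}
    (h : X.charpoly = Polynomial.X ^ 2 - Polynomial.C c) : trace X = 0 := by
  rw [trace_eq_neg_charpoly_coeff, h]
  simp

end Matrix

/-- A `2 × 2` matrix `X` over a commutative ring in which `2` is invertible
satisfies `X² = π₀·I`, `ᵀX = −J·X·J` (with `J = [[0,−1],[1,0]]`) and
`charpoly(X) = T² − π₀` if and only if `X = 0` and `π₀ = 0`. -/
theorem gu2_special_parahoric_chart (R : Type*) [CommRing R] (h2 : IsUnit (2 : R)) (π₀ : R)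
    (X : Matrix (Fin 2) (Fin 2) R) :
    (X * X = π₀ • (1 : Matrix (Fin 2) (Fin 2) R) ∧
     Xᵀ = -(!![(0 : R), -1; 1, 0] * X * !![(0 : R), -1; 1, 0]) ∧
     X.charpoly = Polynomial.X ^ 2 - Polynomial.C π₀) ↔
    (X = 0 ∧ π₀ = 0) := by
  constructor
  · rintro ⟨hsq, hJ, hchar⟩
    have hadj : X = X.adjugate := by
      rw [Matrix.neg_J_mul_mul_J_eq_transpose_adjugate] at hJ
      exact Matrix.transpose_injective hJ
    have hX : X = 0 := Matrix.eq_zero_of_eq_adjugate_of_trace_eq_zero h2 hadj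
      (Matrix.trace_eq_zero_of_charpoly_eq_X_sq_sub_C hchar)
    refine ⟨hX, ?_⟩
    simpa [hX] using (congrFun (congrFun hsq 0) 0).symm
  · rintro ⟨rfl, rfl⟩
    simp
end
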